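/- If w is a segmented Smirnov word of size n with k ascents, l descents, maximal letter at most m, and no occurrence of m at the end of a block, then the q-enumerator with respect to sminv of all words obtained by inserting s occurrences of m at the ends of s distinct blocks equals q^{binom(s,2)} [n−k−l choose s]_q · q^{sminv(w)}. -/

import Mathlib

/-- A word `w` together with a set `B` of block-start positions is a segmented
Smirnov word: block starts are valid positions, position `0` starts a block,
letters are positive, and two adjacent letters inside a common block differ. -/
def IsSSW (w : List ℕ) (B : Finset ℕ) : Prop :=
  (∀ b ∈ B, b < w.length) ∧ (w ≠ [] → 0 ∈ B) ∧ (∀ x ∈ w, 0 < x) ∧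
  (∀ i, i + 1 < w.length → (i + 1) ∉ B → w.getD i 0 ≠ w.getD (i + 1) 0)

def AscentAt (w : List ℕ) (B : Finset ℕ) (i : ℕ) : Prop :=
  i + 1 < w.length ∧ (i + 1) ∉ B ∧ w.getD i 0 < w.getD (i + 1) 0

def DescentAt (w : List ℕ) (B : Finset ℕ) (i : ℕ) : Prop :=
  i + 1 < w.length ∧ (i + 1) ∉ B ∧ w.getD (i + 1) 0 < w.getD i 0

noncomputable def numAsc (w : List ℕ) (B : Finset ℕ) : ℕ := Set.ncard {i | AscentAt w B i}

noncomputable def numDesc (w : List ℕ) (B : Finset ℕ) : ℕ := Set.ncard {i | DescentAt w B i}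

/-- `(i,j)` is a sminversion of the segmented word `(w, B)`. -/
def Sminversion (w : List ℕ) (B : Finset ℕ) (i j : ℕ) : Prop :=
  i < j ∧ j < w.length ∧ w.getD j 0 < w.getD i 0 ∧
    (j ∈ B ∨ w.getD i 0 < w.getD (j - 1) 0 ∨
     (i + 1 ≠ j ∧ w.getD (j - 1) 0 = w.getD i 0 ∧ (j - 1) ∈ B) ∨
     (i + 1 ≠ j ∧ 2 ≤ j ∧ w.getD (j - 1) 0 < w.getD (j - 2) 0 ∧
       w.getD (j - 1) 0 = w.getD i 0))

noncomputable def sminv (w : List ℕ) (B : Finset ℕ) : ℕ :=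
  Set.ncard {p : ℕ × ℕ | Sminversion w B p.1 p.2}

/-- The q-analogue `[m]_q = 1 + q + ⋯ + q^{m-1}` as a polynomial. -/
noncomputable def qInt (m : ℕ) : Polynomial ℕ := ∑ i ∈ Finset.range m, Polynomial.X ^ i

/-- The Gaussian binomial coefficient, via the q-Pascal recurrence. -/
noncomputable def qbinom : ℕ → ℕ → Polynomial ℕ
  | _, 0 => 1
  | 0, _ + 1 => 0
  | n + 1, k + 1 => qbinom n k + Polynomial.X ^ (k + 1) * qbinom n (k + 1)

/-- Insert the letter `m` immediately before every (original) position in `S`;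
the first argument is the index of the head of the remaining list. -/
def multiInsert (m : ℕ) (S : Finset ℕ) : ℕ → List ℕ → List ℕ
  | i, [] => if i ∈ S then [m] else []
  | i, x :: xs => (if i ∈ S then [m] else []) ++ x :: multiInsert m S (i + 1) xs

/-!
Inserting `m` before a position `p ∈ blockEnds w B`, i.e. at the end of the block containing
`p - 1`, keeps the old sminversions and creates none among the old letters. Since `m` is maximal,
the new letter is the second entry of no sminversion, and the first entry of exactly one
sminversion per block starting at or after `p` (paired with the first letter below `m` of that
block), i.e. of `#{e ∈ blockEnds w B | p < e}` of them. So `sminv` grows by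
`∑ p ∈ S, #{e ∈ blockEnds w B | p < e}`, and summing `q` to that power over the `s`-subsets `S` of
an `N`-set gives `q ^ (s choose 2) * [N choose s]_q`. Finally every position of `w` is either an
ascent, a descent or the last letter of a block, so `N = n - k - l`.
-/

open Finset Polynomial

namespace Finset

theorem card_filter_le_and (S : Finset ℕ) (P : ℕ → Prop) [DecidablePred P] {i : ℕ} (hi : P i) :
    #{p ∈ S | i ≤ p ∧ P p} = (if i ∈ S then 1 else 0) + #{p ∈ S | i + 1 ≤ p ∧ P p} := by
  rw [card_filter, card_filter, ← sum_ite_eq' S i fun _ => 1, ← sum_add_distrib]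
  refine sum_congr rfl fun p _ => ?_
  by_cases hp : p = i
  · subst hp
    simp [hi]
  · simp [hp, show i ≤ p ↔ i + 1 ≤ p by omega]

@[simp]
theorem filter_lt_and_le_self (S : Finset ℕ) (i : ℕ) : {p ∈ S | i < p ∧ p ≤ i} = ∅ :=
  filter_false_of_mem fun _ _ => by omega

end Finset

theorem Set.ncard_setOf_eq_card_filter {α : Type*} {P : α → Prop} [DecidablePred P] (s : Finset α)
    (h : ∀ a, P a → a ∈ s) : {a | P a}.ncard = #{a ∈ s | P a} := by
  rw [← Set.ncard_coe_finset, coe_filter]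
  congr
  ext a
  exact ⟨fun ha => ⟨h a ha, ha⟩, And.right⟩

theorem qbinom_zero_right (n : ℕ) : qbinom n 0 = 1 := by
  cases n <;> rfl

theorem qbinom_succ_succ (n k : ℕ) :
    qbinom (n + 1) (k + 1) = qbinom n k + X ^ (k + 1) * qbinom n (k + 1) := rfl

theorem sum_powersetCard_X_pow_eq_qbinom {α : Type*} [LinearOrder α] (E : Finset α) (s : ℕ) :
    ∑ S ∈ E.powersetCard s, (X : ℕ[X]) ^ ∑ p ∈ S, #{e ∈ E | p < e} =
      X ^ s.choose 2 * qbinom #E s := by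
  induction E using Finset.induction_on_max generalizing s with
  | empty => cases s <;> simp [qbinom_zero_right, qbinom]
  | insert a E hlt ih =>
    rcases s with _ | t
    · simp [qbinom_zero_right]
    have ha : a ∉ E := fun h => (hlt a h).false
    have hsum (T : Finset α) (hT : T ⊆ E) :
        ∑ p ∈ T, #{e ∈ insert a E | p < e} = ∑ p ∈ T, #{e ∈ E | p < e} + #T := by
      rw [card_eq_sum_ones, ← sum_add_distrib]
      refine sum_congr rfl fun p hp => ?_
      rw [filter_insert, if_pos (hlt p (hT hp)), card_insert_of_notMem (by simp [ha])]
    have htop : #{e ∈ insert a E | a < e} = 0 := by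
      simpa [filter_insert] using fun e he => (hlt e he).le
    have hinj : Set.InjOn (insert a) (E.powersetCard t : Set (Finset α)) := fun T hT T' hT' h => by
      rw [← erase_insert (fun h => ha ((mem_powersetCard.1 hT).1 h)),
        ← erase_insert (fun h => ha ((mem_powersetCard.1 hT').1 h)), h]
    have hdisj : Disjoint (E.powersetCard (t + 1)) ((E.powersetCard t).image (insert a)) :=
      disjoint_left.2 fun S hS hS' => by
        obtain ⟨T, -, rfl⟩ := mem_image.1 hS'
        exact ha ((mem_powersetCard.1 hS).1 (mem_insert_self a T))
    have hnew : ∑ S ∈ E.powersetCard (t + 1), (X : ℕ[X]) ^ ∑ p ∈ S, #{e ∈ insert a E | p < e} =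
        X ^ (t + 1) * (X ^ (t + 1).choose 2 * qbinom #E (t + 1)) := by
      rw [← ih, mul_sum]
      refine sum_congr rfl fun S hS => ?_
      obtain ⟨hSE, hScard⟩ := mem_powersetCard.1 hS
      rw [hsum S hSE, hScard, pow_add, mul_comm]
    have hold : ∑ T ∈ E.powersetCard t, (X : ℕ[X]) ^ ∑ p ∈ insert a T, #{e ∈ insert a E | p < e} =
        X ^ t * (X ^ t.choose 2 * qbinom #E t) := by
      rw [← ih, mul_sum]
      refine sum_congr rfl fun T hT => ?_
      obtain ⟨hTE, hTcard⟩ := mem_powersetCard.1 hT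
      rw [sum_insert fun h => ha (hTE h), htop, hsum T hTE, hTcard, zero_add, pow_add, mul_comm]
    rw [powersetCard_succ_insert ha, sum_union hdisj, sum_image hinj, hnew, hold,
      card_insert_of_notMem ha, qbinom_succ_succ, Nat.choose_succ_succ', Nat.choose_one_right]
    ring

/-- After inserting `m` before every position in `S`, the letter at position `i` of the old word
sits at `origPos S i`, and the `m` inserted before `p ∈ S` sits at `insPos S p`. -/
def origPos (S : Finset ℕ) (i : ℕ) : ℕ := i + #{p ∈ S | p ≤ i}

def insPos (S : Finset ℕ) (p : ℕ) : ℕ := p + #{q ∈ S | q < p}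

section Positions

variable (S : Finset ℕ)

theorem origPos_strictMono : StrictMono (origPos S) := fun i j hij => by
  have := card_le_card (monotone_filter_right S fun p _ (hp : p ≤ i) => hp.trans hij.le)
  unfold origPos
  omega

theorem insPos_strictMono : StrictMono (insPos S) := fun i j hij => by
  have := card_le_card (monotone_filter_right S fun p _ (hp : p < i) => hp.trans hij)
  unfold insPos
  omega

theorem le_origPos (i : ℕ) : i ≤ origPos S i := Nat.le_add_right _ _

theorem origPos_le (i : ℕ) : origPos S i ≤ i + #S := by
  have := card_filter_le S (· ≤ i)
  unfold origPos
  omega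

variable {S}

theorem insPos_add_one {p : ℕ} (hp : p ∈ S) : insPos S p + 1 = origPos S p := by
  have : {q ∈ S | q ≤ p} = insert p {q ∈ S | q < p} := by
    ext q
    simp only [mem_filter, mem_insert]
    grind
  rw [origPos, insPos, this, card_insert_of_notMem (by simp)]
  omega

theorem origPos_lt_insPos {i p : ℕ} (h : i < p) : origPos S i < insPos S p := by
  have := card_le_card (monotone_filter_right S fun q _ (hq : q ≤ i) => hq.trans_lt h)
  unfold origPos insPos
  omega

theorem insPos_lt_origPos_iff {i p : ℕ} (hp : p ∈ S) : insPos S p < origPos S i ↔ p ≤ i := by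
  refine ⟨fun h => not_lt.1 fun hi => (origPos_lt_insPos hi).not_gt h, fun h => ?_⟩
  rw [← Nat.add_one_le_iff, insPos_add_one hp]
  exact (origPos_strictMono S).monotone h

theorem origPos_ne_insPos {i p : ℕ} (hp : p ∈ S) : origPos S i ≠ insPos S p := by
  rcases lt_or_ge i p with h | h
  · exact (origPos_lt_insPos h).ne
  · exact ((insPos_lt_origPos_iff hp).2 h).ne'

theorem origPos_sub_one {j : ℕ} (hj : j ∉ S) (h : 0 < j) : origPos S j - 1 = origPos S (j - 1) := by
  have : {p ∈ S | p ≤ j} = {p ∈ S | p ≤ j - 1} :=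
    filter_congr fun p hp => ⟨fun h' => by grind, fun h' => by omega⟩
  rw [origPos, origPos, this]
  omega

theorem exists_origPos_or_insPos {n a : ℕ} (hS : ∀ p ∈ S, p ≤ n) (ha : a < n + #S) :
    (∃ j < n, origPos S j = a) ∨ ∃ p ∈ S, insPos S p = a := by
  have hdisj : Disjoint ((range n).image (origPos S)) (S.image (insPos S)) := by
    simp only [disjoint_left, mem_image, mem_range]
    rintro _ ⟨j, -, rfl⟩ ⟨p, hp, hpj⟩
    exact origPos_ne_insPos hp hpj.symm
  have hcover : (range n).image (origPos S) ∪ S.image (insPos S) = range (n + #S) := by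
    refine eq_of_subset_of_card_le (fun b hb => ?_) ?_
    · simp only [mem_union, mem_image, mem_range] at hb ⊢
      rcases hb with ⟨j, hj, rfl⟩ | ⟨p, hp, rfl⟩
      · have := origPos_le S j
        omega
      · have := insPos_add_one hp
        have := origPos_le S p
        have := hS p hp
        omega
    · rw [card_range, card_union_of_disjoint hdisj,
        card_image_of_injective _ (origPos_strictMono S).injective,
        card_image_of_injective _ (insPos_strictMono S).injective, card_range]
  have : a ∈ (range n).image (origPos S) ∪ S.image (insPos S) := hcover ▸ mem_range.2 ha
  simpa only [mem_union, mem_image, mem_range] using this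

end Positions

section MultiInsert

variable (m : ℕ) (S : Finset ℕ)

theorem mem_multiInsert {x : ℕ} (xs : List ℕ) (i : ℕ) (hx : x ∈ multiInsert m S i xs) :
    x = m ∨ x ∈ xs := by
  induction xs generalizing i with
  | nil => grind [multiInsert]
  | cons y ys ih =>
    simp only [multiInsert, List.mem_append, List.mem_cons] at hx
    grind

theorem length_multiInsert (xs : List ℕ) (i : ℕ) :
    (multiInsert m S i xs).length = xs.length + #{p ∈ S | i ≤ p ∧ p ≤ i + xs.length} := by
  induction xs generalizing i with
  | nil =>
    rw [List.length_nil, add_zero, card_filter_le_and S (· ≤ i) (le_refl i), multiInsert]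
    split_ifs <;> simp
  | cons x xs ih =>
    rw [card_filter_le_and S _ (by simp), multiInsert, List.length_append, List.length_cons, ih]
    split_ifs <;> simp <;> grind

theorem getD_multiInsert_of_lt (xs : List ℕ) (i : ℕ) {j : ℕ} (hj : j < xs.length) :
    (multiInsert m S i xs).getD (j + #{p ∈ S | i ≤ p ∧ p ≤ i + j}) 0 = xs.getD j 0 := by
  induction xs generalizing i j with
  | nil => simp at hj
  | cons x xs ih =>
    rw [card_filter_le_and S _ (by simp), multiInsert]
    cases j with
    | zero => split_ifs <;> simp
    | succ j =>
      have := ih (i + 1) (j := j) (by simpa using hj)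
      split_ifs <;> simp <;> grind

theorem getD_multiInsert_of_mem (xs : List ℕ) {i p : ℕ} (hp : p ∈ S) (hip : i ≤ p)
    (hpi : p ≤ i + xs.length) :
    (multiInsert m S i xs).getD (p - i + #{q ∈ S | i ≤ q ∧ q < p}) 0 = m := by
  induction xs generalizing i with
  | nil =>
    obtain rfl : p = i := by simp at hpi; omega
    simp [multiInsert, hp]
  | cons x xs ih =>
    rcases hip.eq_or_lt with rfl | hip
    · rw [filter_false_of_mem fun _ _ => by omega]
      simp [multiInsert, hp]
    · have := ih (i := i + 1) hip (by simp at hpi; omega)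
      rw [card_filter_le_and S (· < p) hip, multiInsert]
      split_ifs <;> simp <;> grind

variable {m S} {w : List ℕ}

theorem length_multiInsert_zero (hS : ∀ p ∈ S, p ≤ w.length) :
    (multiInsert m S 0 w).length = w.length + #S := by
  rw [length_multiInsert, filter_true_of_mem fun p hp => ⟨p.zero_le, by simpa using hS p hp⟩]

theorem getD_multiInsert_origPos {j : ℕ} (hj : j < w.length) :
    (multiInsert m S 0 w).getD (origPos S j) 0 = w.getD j 0 := by
  simpa [origPos] using getD_multiInsert_of_lt m S w 0 hj

theorem getD_multiInsert_insPos (hS : ∀ p ∈ S, p ≤ w.length) {p : ℕ} (hp : p ∈ S) :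
    (multiInsert m S 0 w).getD (insPos S p) 0 = m := by
  simpa [insPos] using getD_multiInsert_of_mem m S w hp p.zero_le (by simpa using hS p hp)

theorem getD_le_of_forall_le {l : List ℕ} (h : ∀ x ∈ l, x ≤ m) (j : ℕ) : l.getD j 0 ≤ m := by
  rw [List.getD_eq_getElem?_getD]
  cases hj : l[j]? with
  | none => exact Nat.zero_le m
  | some x => exact h x (List.mem_of_getElem? hj)

theorem getD_multiInsert_le (hm : ∀ x ∈ w, x ≤ m) (a : ℕ) : (multiInsert m S 0 w).getD a 0 ≤ m :=
  getD_le_of_forall_le (fun x hx => (mem_multiInsert m S w 0 hx).elim le_of_eq (hm x)) a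

end MultiInsert

/-- When `j - 1` starts a block, the last clause of `Sminversion` implies the previous one, so the
letter at `j - 2` does not matter. -/
theorem sminversion_iff_of_agree {w w' : List ℕ} {B B' : Finset ℕ} {i j i' j' : ℕ}
    (hij : i < j) (hij' : i' < j') (hj : j < w.length) (hj' : j' < w'.length)
    (hi : w'.getD i' 0 = w.getD i 0) (hjv : w'.getD j' 0 = w.getD j 0) (hjB : j' ∈ B' ↔ j ∈ B)
    (hprev : j ∉ B → w'.getD (j' - 1) 0 = w.getD (j - 1) 0 ∧ (j' - 1 ∈ B' ↔ j - 1 ∈ B) ∧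
      (i' + 1 = j' ↔ i + 1 = j) ∧
      (j - 1 ∉ B → 2 ≤ j' ∧ 2 ≤ j ∧ w'.getD (j' - 2) 0 = w.getD (j - 2) 0)) :
    Sminversion w' B' i' j' ↔ Sminversion w B i j := by
  unfold Sminversion
  rw [hi, hjv, hjB]
  by_cases hjB : j ∈ B
  · simp only [hij, hij', hj, hj', hjB, true_or, and_true]
  obtain ⟨h1, h1B, hsucc, h2⟩ := hprev hjB
  rw [h1, h1B, Ne, hsucc]
  by_cases hj1B : j - 1 ∈ B
  · simp only [hij, hij', hj, hj', hjB, hj1B, true_and, false_or, and_true]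
    grind
  · obtain ⟨h2', h2, h2v⟩ := h2 hj1B
    simp only [hij, hij', hj, hj', hjB, hj1B, h2, h2', h2v, true_and, false_or, and_false]

/-- `p ∈ blockEnds w B` iff `p - 1` is the last position of a block: a letter inserted before
position `p` ends up at the end of that block. -/
def blockEnds (w : List ℕ) (B : Finset ℕ) : Finset ℕ := (insert w.length B).erase 0

def IsFirstBelowInBlock (w : List ℕ) (B : Finset ℕ) (m j : ℕ) : Prop :=
  w.getD j 0 < m ∧ (j ∈ B ∨ (j - 1 ∈ B ∧ w.getD (j - 1) 0 = m))

instance (w : List ℕ) (B : Finset ℕ) (m j : ℕ) : Decidable (IsFirstBelowInBlock w B m j) := by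
  unfold IsFirstBelowInBlock; infer_instance

section SegmentedWords

variable {w : List ℕ} {B S : Finset ℕ} {m : ℕ}

theorem mem_blockEnds {p : ℕ} : p ∈ blockEnds w B ↔ p ≠ 0 ∧ (p = w.length ∨ p ∈ B) := by
  simp [blockEnds]

theorem mem_of_mem_blockEnds {p : ℕ} (hp : p ∈ blockEnds w B) (hpn : p < w.length) : p ∈ B := by
  grind [mem_blockEnds]

theorem pos_and_le_length_of_mem_blockEnds (hB : ∀ b ∈ B, b < w.length) {p : ℕ}
    (hp : p ∈ blockEnds w B) : 0 < p ∧ p ≤ w.length := by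
  rcases mem_blockEnds.1 hp with ⟨hp0, rfl | hpB⟩
  · omega
  · exact ⟨by omega, (hB p hpB).le⟩

theorem le_length_of_subset_blockEnds (hB : ∀ b ∈ B, b < w.length) (hS : S ⊆ blockEnds w B) :
    ∀ p ∈ S, p ≤ w.length :=
  fun _ hp => (pos_and_le_length_of_mem_blockEnds hB (hS hp)).2

theorem IsSSW.getD_succ_lt (h : IsSSW w B) (hm : ∀ x ∈ w, x ≤ m)
    (hno : ∀ p ∈ blockEnds w B, w.getD (p - 1) 0 ≠ m) {b : ℕ} (hb : b ∈ B) (hbm : w.getD b 0 = m) :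
    b + 1 < w.length ∧ b + 1 ∉ B ∧ w.getD (b + 1) 0 < m := by
  have hend : b + 1 ∉ blockEnds w B := fun h' => hno _ h' hbm
  rw [mem_blockEnds] at hend
  have hlt : b + 1 < w.length := by grind [h.1 b hb]
  have hnB : b + 1 ∉ B := by grind
  have := h.2.2.2 b hlt hnB
  have := getD_le_of_forall_le hm (b + 1)
  exact ⟨hlt, hnB, by omega⟩

theorem sminversion_origPos_iff (h : IsSSW w B) (hS : S ⊆ blockEnds w B) {i j : ℕ} (hij : i < j)
    (hj : j < w.length) :
    Sminversion (multiInsert m S 0 w) (B.image (origPos S)) (origPos S i) (origPos S j) ↔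
      Sminversion w B i j := by
  have hSn := le_length_of_subset_blockEnds h.1 hS
  have hB {k : ℕ} : origPos S k ∈ B.image (origPos S) ↔ k ∈ B :=
    (origPos_strictMono S).injective.mem_finset_image
  have hnotS {k : ℕ} (hk : k < w.length) (hkB : k ∉ B) : k ∉ S :=
    fun hkS => hkB (mem_of_mem_blockEnds (hS hkS) hk)
  refine sminversion_iff_of_agree hij (origPos_strictMono S hij) hj ?_
    (getD_multiInsert_origPos (hij.trans hj)) (getD_multiInsert_origPos hj) hB fun hjB => ?_
  · rw [length_multiInsert_zero hSn]
    have := origPos_le S j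
    omega
  have h1 := origPos_sub_one (hnotS hj hjB) (by omega)
  have := le_origPos S j
  refine ⟨by rw [h1]; exact getD_multiInsert_origPos (by omega), by rw [h1]; exact hB, ?_,
    fun hj1B => ?_⟩
  · rw [show origPos S i + 1 = origPos S j ↔ origPos S i = origPos S (j - 1) by omega,
      (origPos_strictMono S).injective.eq_iff]
    omega
  · have hj1 : j - 1 ≠ 0 := fun h0 => hj1B (h0 ▸ h.2.1 (List.ne_nil_of_length_pos (by omega)))
    have h2 := origPos_sub_one (hnotS (by omega) hj1B) (by omega)
    refine ⟨by omega, by omega, ?_⟩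
    rw [show origPos S j - 2 = origPos S (j - 1 - 1) by omega, show j - 2 = j - 1 - 1 by omega]
    exact getD_multiInsert_origPos (by omega)

theorem sminversion_insPos_iff (h : IsSSW w B) (hm : ∀ x ∈ w, x ≤ m)
    (hno : ∀ p ∈ blockEnds w B, w.getD (p - 1) 0 ≠ m) (hS : S ⊆ blockEnds w B) {p j : ℕ}
    (hp : p ∈ S) (hj : j < w.length) :
    Sminversion (multiInsert m S 0 w) (B.image (origPos S)) (insPos S p) (origPos S j) ↔
      p ≤ j ∧ IsFirstBelowInBlock w B m j := by
  have hSn := le_length_of_subset_blockEnds h.1 hS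
  have hB {k : ℕ} : origPos S k ∈ B.image (origPos S) ↔ k ∈ B :=
    (origPos_strictMono S).injective.mem_finset_image
  have hlen : origPos S j < (multiInsert m S 0 w).length := by
    rw [length_multiInsert_zero hSn]
    have := origPos_le S j
    omega
  rw [Sminversion, insPos_lt_origPos_iff hp, getD_multiInsert_insPos hSn hp,
    getD_multiInsert_origPos hj, hB, IsFirstBelowInBlock]
  simp only [hlen, true_and]
  refine and_congr_right fun hpj => and_congr_right fun _ => ?_
  by_cases hjB : j ∈ B
  · simp only [hjB, true_or]
  have h1 := origPos_sub_one (fun hjS => hjB (mem_of_mem_blockEnds (hS hjS) hj))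
    (by have := (pos_and_le_length_of_mem_blockEnds h.1 (hS hp)).1; omega)
  rw [h1, getD_multiInsert_origPos (by omega), hB, insPos_add_one hp, Ne,
    (origPos_strictMono S).injective.eq_iff]
  have := getD_le_of_forall_le hm (j - 1)
  have := getD_multiInsert_le (S := S) hm (origPos S j - 2)
  simp only [hjB, false_or]
  constructor
  · rintro (h2 | ⟨-, hm', hB'⟩ | ⟨-, -, h4, h4'⟩)
    · omega
    · exact ⟨hB', hm'⟩
    · omega
  · rintro ⟨hB', hm'⟩
    exact Or.inr (Or.inl ⟨fun hpj => hno j (hS (hpj ▸ hp)) hm', hm', hB'⟩)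

theorem not_sminversion_insPos (h : IsSSW w B) (hm : ∀ x ∈ w, x ≤ m) (hS : S ⊆ blockEnds w B)
    {p : ℕ} (hp : p ∈ S) (a : ℕ) :
    ¬ Sminversion (multiInsert m S 0 w) (B.image (origPos S)) a (insPos S p) := fun hsm => by
  have := hsm.2.2.1
  rw [getD_multiInsert_insPos (le_length_of_subset_blockEnds h.1 hS) hp] at this
  exact (getD_multiInsert_le hm a).not_gt this

theorem card_filter_isFirstBelowInBlock (h : IsSSW w B) (hm : ∀ x ∈ w, x ≤ m)
    (hno : ∀ p ∈ blockEnds w B, w.getD (p - 1) 0 ≠ m) {p : ℕ} (hp : p ∈ blockEnds w B) :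
    #{j ∈ range w.length | p ≤ j ∧ IsFirstBelowInBlock w B m j} = #{b ∈ B | p ≤ b} := by
  have hp0 := (pos_and_le_length_of_mem_blockEnds h.1 hp).1
  have hpj {j : ℕ} (hj1 : w.getD (j - 1) 0 = m) : p ≠ j := fun hpj => hno p hp (hpj ▸ hj1)
  have hbm {b : ℕ} (hbm : ¬ w.getD b 0 < m) : w.getD b 0 = m := by
    have := getD_le_of_forall_le hm b
    omega
  -- the first letter below `m` of the block starting at `b` is at `b`, or at `b + 1` if `w b = m`
  refine card_nbij' (fun j => if j ∈ B then j else j - 1)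
    (fun b => if w.getD b 0 < m then b else b + 1) ?_ ?_ ?_ ?_
  · intro j hj
    simp only [mem_coe, mem_filter, mem_range] at hj ⊢
    unfold IsFirstBelowInBlock at hj
    split_ifs with hjB
    · exact ⟨hjB, hj.2.1⟩
    · have := hpj (j := j)
      grind
  · intro b hb
    simp only [mem_coe, mem_filter, mem_range] at hb ⊢
    unfold IsFirstBelowInBlock
    split_ifs with hblt
    · exact ⟨h.1 b hb.1, hb.2, hblt, Or.inl hb.1⟩
    · obtain ⟨hlt, -, hlt'⟩ := h.getD_succ_lt hm hno hb.1 (hbm hblt)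
      exact ⟨hlt, by omega, hlt', Or.inr ⟨hb.1, hbm hblt⟩⟩
  · intro j hj
    simp only [mem_coe, mem_filter, mem_range] at hj ⊢
    unfold IsFirstBelowInBlock at hj
    split_ifs <;> grind
  · intro b hb
    simp only [mem_coe, mem_filter] at hb
    dsimp only
    by_cases hblt : w.getD b 0 < m
    · rw [if_pos hblt, if_pos hb.1]
    · rw [if_neg hblt, if_neg (h.getD_succ_lt hm hno hb.1 (hbm hblt)).2.1, Nat.add_sub_cancel]

theorem card_filter_blockEnds_lt (hB : ∀ b ∈ B, b < w.length) {p : ℕ} (hp : p ∈ blockEnds w B) :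
    #{e ∈ blockEnds w B | p < e} = #{b ∈ B | p ≤ b} := by
  have hpn := (pos_and_le_length_of_mem_blockEnds hB hp).2
  have hnB : w.length ∉ B := fun hn => (hB _ hn).false
  have hends : {e ∈ blockEnds w B | p < e} = {e ∈ insert w.length B | p < e} := by
    rw [blockEnds, filter_erase, erase_eq_of_notMem (by simp)]
  have hstart : #{e ∈ insert w.length B | p ≤ e} = #{b ∈ B | p ≤ b} + 1 := by
    rw [filter_insert, if_pos hpn, card_insert_of_notMem (by simp [hnB])]
  have hself : #{e ∈ insert w.length B | p ≤ e} = #{e ∈ insert w.length B | p < e} + 1 := by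
    rw [← card_insert_of_notMem (by simp : p ∉ {e ∈ insert w.length B | p < e})]
    congr 1
    ext e
    have := mem_blockEnds.1 hp
    simp only [mem_filter, mem_insert]
    grind
  rw [hends]
  omega

theorem sminversion_multiInsert_cases (h : IsSSW w B) (hm : ∀ x ∈ w, x ≤ m)
    (hno : ∀ p ∈ blockEnds w B, w.getD (p - 1) 0 ≠ m) (hS : S ⊆ blockEnds w B) {a b : ℕ}
    (hab : Sminversion (multiInsert m S 0 w) (B.image (origPos S)) a b) :
    (∃ i j, Sminversion w B i j ∧ origPos S i = a ∧ origPos S j = b) ∨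
      ∃ p ∈ S, ∃ j < w.length, (p ≤ j ∧ IsFirstBelowInBlock w B m j) ∧
        insPos S p = a ∧ origPos S j = b := by
  have hSn := le_length_of_subset_blockEnds h.1 hS
  have hlen := length_multiInsert_zero (m := m) hSn
  rcases exists_origPos_or_insPos hSn (hlen ▸ hab.2.1) with ⟨j, hj, rfl⟩ | ⟨q, hq, rfl⟩
  swap
  · exact absurd hab (not_sminversion_insPos h hm hS hq a)
  rcases exists_origPos_or_insPos hSn (hlen ▸ hab.1.trans hab.2.1) with ⟨i, -, rfl⟩ | ⟨p, hp, rfl⟩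
  · have hij := (origPos_strictMono S).lt_iff_lt.1 hab.1
    exact Or.inl ⟨i, j, (sminversion_origPos_iff h hS hij hj).1 hab, rfl, rfl⟩
  · exact Or.inr ⟨p, hp, j, hj, (sminversion_insPos_iff h hm hno hS hp hj).1 hab, rfl, rfl⟩

theorem Sminversion.mem_range_product {w : List ℕ} {B : Finset ℕ} {i j : ℕ}
    (hs : Sminversion w B i j) : (i, j) ∈ range w.length ×ˢ range w.length := by
  simp [hs.2.1, hs.1.trans hs.2.1]

instance (w : List ℕ) (B : Finset ℕ) (i j : ℕ) : Decidable (Sminversion w B i j) := by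
  unfold Sminversion; infer_instance

theorem mem_filter_sminversion {w : List ℕ} {B : Finset ℕ} {i j : ℕ} :
    (i, j) ∈ {q ∈ range w.length ×ˢ range w.length | Sminversion w B q.1 q.2} ↔
      Sminversion w B i j :=
  ⟨fun hq => (mem_filter.1 hq).2, fun hs => mem_filter.2 ⟨hs.mem_range_product, hs⟩⟩

theorem sminv_eq_card (w : List ℕ) (B : Finset ℕ) :
    sminv w B = #{q ∈ range w.length ×ˢ range w.length | Sminversion w B q.1 q.2} :=
  Set.ncard_setOf_eq_card_filter _ fun _ hs => hs.mem_range_product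

theorem sminv_multiInsert (h : IsSSW w B) (hm : ∀ x ∈ w, x ≤ m)
    (hno : ∀ p ∈ blockEnds w B, w.getD (p - 1) 0 ≠ m) (hS : S ⊆ blockEnds w B) :
    sminv (multiInsert m S 0 w) (B.image (origPos S)) =
      sminv w B + ∑ p ∈ S, #{e ∈ blockEnds w B | p < e} := by
  rw [← sum_congr rfl fun p hp => (card_filter_isFirstBelowInBlock h hm hno (hS hp)).trans
      (card_filter_blockEnds_lt h.1 (hS hp)).symm, ← card_sigma,
    sminv_eq_card, sminv_eq_card, ← card_disjSum]
  symm
  refine card_nbij (Sum.elim (Prod.map (origPos S) (origPos S))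
    fun q => (insPos S q.1, origPos S q.2)) ?_ ?_ ?_
  · rintro (⟨i, j⟩ | ⟨p, j⟩) hq <;>
      simp only [mem_coe, inl_mem_disjSum, inr_mem_disjSum, Sum.elim_inl, Sum.elim_inr,
        Prod.map] at hq ⊢ <;> rw [mem_filter_sminversion]
    · rw [mem_filter_sminversion] at hq
      exact (sminversion_origPos_iff h hS hq.1 hq.2.1).2 hq
    · simp only [mem_sigma, mem_filter, mem_range] at hq
      exact (sminversion_insPos_iff h hm hno hS hq.1 hq.2.1).2 hq.2.2
  · rintro (⟨i, j⟩ | ⟨p, j⟩) hq (⟨i', j'⟩ | ⟨p', j'⟩) hq' heq <;>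
      simp only [mem_coe, inl_mem_disjSum, inr_mem_disjSum, mem_sigma, Sum.elim_inl,
        Sum.elim_inr, Prod.map, Prod.mk.injEq] at hq hq' heq
    · rw [(origPos_strictMono S).injective heq.1, (origPos_strictMono S).injective heq.2]
    · exact absurd heq.1 (origPos_ne_insPos hq'.1)
    · exact absurd heq.1.symm (origPos_ne_insPos hq.1)
    · rw [(insPos_strictMono S).injective heq.1, (origPos_strictMono S).injective heq.2]
  · rintro ⟨a, b⟩ hab
    rw [mem_coe, mem_filter_sminversion] at hab
    rcases sminversion_multiInsert_cases h hm hno hS hab with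
      ⟨i, j, hij, rfl, rfl⟩ | ⟨p, hp, j, hj, hpj, rfl, rfl⟩
    · refine ⟨Sum.inl (i, j), ?_, rfl⟩
      rw [mem_coe, inl_mem_disjSum, mem_filter_sminversion]
      exact hij
    · exact ⟨Sum.inr ⟨p, j⟩, by simpa [hp, hj] using hpj, rfl⟩

instance (w : List ℕ) (B : Finset ℕ) (i : ℕ) : Decidable (AscentAt w B i) := by
  unfold AscentAt; infer_instance

instance (w : List ℕ) (B : Finset ℕ) (i : ℕ) : Decidable (DescentAt w B i) := by
  unfold DescentAt; infer_instance

theorem card_blockEnds (h : IsSSW w B) :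
    #(blockEnds w B) = w.length - numAsc w B - numDesc w B := by
  have hA : numAsc w B = #{i ∈ range w.length | AscentAt w B i} :=
    Set.ncard_setOf_eq_card_filter _ fun i hi => mem_range.2 (by have := hi.1; omega)
  have hD : numDesc w B = #{i ∈ range w.length | DescentAt w B i} :=
    Set.ncard_setOf_eq_card_filter _ fun i hi => mem_range.2 (by have := hi.1; omega)
  have hsplit : #{i ∈ range w.length | AscentAt w B i} + #{i ∈ range w.length | DescentAt w B i} +
      #{i ∈ range w.length | i + 1 ∈ insert w.length B} = w.length := by
    rw [card_filter, card_filter, card_filter, ← sum_add_distrib, ← sum_add_distrib]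
    conv_rhs => rw [← card_range w.length, card_eq_sum_ones]
    refine sum_congr rfl fun i hi => ?_
    have := h.2.2.2 i
    unfold AscentAt DescentAt
    simp only [mem_range, mem_insert] at hi ⊢
    split_ifs <;> grind
  have hends : #{i ∈ range w.length | i + 1 ∈ insert w.length B} = #(blockEnds w B) := by
    rw [← card_image_of_injective _ (add_left_injective 1)]
    congr 1
    ext e
    simp only [mem_image, mem_filter, mem_range, mem_insert, mem_blockEnds]
    constructor
    · rintro ⟨i, ⟨-, hi⟩, rfl⟩
      exact ⟨by omega, hi⟩
    · rintro ⟨he0, he⟩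
      have : e ≤ w.length := by rcases he with rfl | he; exacts [le_rfl, (h.1 e he).le]
      exact ⟨e - 1, ⟨by omega, by rwa [Nat.sub_add_cancel (by omega)]⟩, by omega⟩
  omega

end SegmentedWords

/-- Double-rise insertion: for a segmented Smirnov word `w` of length `n` with
`k` ascents, `l` descents, all letters `≤ m`, and no block ending with `m`,
the q-enumerator (w.r.t. `sminv`) of the words obtained by inserting `s`
occurrences of `m`, each at the end of a distinct block, is
`q^{binom(s,2)} [n-k-l choose s]_q · q^{sminv w}`. -/
theorem stmt19 (w : List ℕ) (B : Finset ℕ) (m k l s : ℕ) (h : IsSSW w B)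
    (hm : ∀ x ∈ w, x ≤ m)
    (hno : ∀ p ∈ (insert w.length B).erase 0, w.getD (p - 1) 0 ≠ m)
    (hk : numAsc w B = k) (hl : numDesc w B = l) :
    ∑ S ∈ Finset.powersetCard s ((insert w.length B).erase 0),
      Polynomial.X ^ sminv (multiInsert m S 0 w)
        (B.image (fun b => b + (S.filter (· ≤ b)).card)) =
    Polynomial.X ^ Nat.choose s 2 * qbinom (w.length - k - l) s *
      Polynomial.X ^ sminv w B := by
  subst hk hl
  rw [← card_blockEnds h, ← sum_powersetCard_X_pow_eq_qbinom, sum_mul]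
  refine sum_congr rfl fun S hS => ?_
  rw [← pow_add, add_comm]
  exact congrArg _ (sminv_multiInsert h hm hno (mem_powersetCard.1 hS).1)
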